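/- Let $\chi^2_k$ be a chi-squared random variable with $k$ degrees of freedom and let $0 < \gamma < k$. Then $\mathbb{P}\left[\chi^2_k \geq \gamma\right] \geq 1 - e^{-\frac{(k-\gamma)^2}{4k}}$. -/

import Mathlib

open MeasureTheory ProbabilityTheory Real
open scoped NNReal

/-! Chernoff's bound for the lower tail of `∑ W_i ^ 2`, with `E exp (t W²) = (1 - 2t)^(-1/2)` for a
standard normal `W`, gives at the optimal `t = -(k - γ) / (2γ)` the bound
`P[χ²_k ≤ γ] ≤ exp ((k - γ) / 2) (γ / k)^(k / 2)`. Writing `γ / k = 1 - x`, the inequality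
`log (1 - x) ≤ -x - x² / 2` turns this into `exp (-(k - γ)² / (4k))`. -/

lemma Real.log_one_sub_le_neg_sub_sq_div_two {t : ℝ} (h0 : 0 ≤ t) (h1 : t < 1) :
    log (1 - t) ≤ -t - t ^ 2 / 2 := by
  have hsum := hasSum_pow_div_log_of_abs_lt_one (by rwa [abs_of_nonneg h0])
  have := sum_le_hasSum (Finset.range 2) (fun n _ => by positivity) hsum
  norm_num [Finset.sum_range_succ] at this
  linarith

lemma integral_exp_mul_sq_gaussianReal {v : ℝ≥0} (hv : v ≠ 0) {s : ℝ} (hs : s * v < 1 / 2) :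
    ∫ x, exp (s * x ^ 2) ∂gaussianReal 0 v = (√(1 - 2 * s * v))⁻¹ := by
  have hv' : (0 : ℝ) < v := by positivity
  have hb : 0 < 1 / (2 * v) - s := by
    rw [sub_pos, lt_div_iff₀ (by positivity)]; linarith
  have hpdf : ∀ x, gaussianPDFReal 0 v x • exp (s * x ^ 2)
      = (√(2 * π * v))⁻¹ * exp (-(1 / (2 * v) - s) * x ^ 2) := by
    intro x
    rw [gaussianPDFReal, smul_eq_mul, mul_assoc, ← exp_add]
    congr 2
    field_simp
    ring
  simp_rw [integral_gaussianReal_eq_integral_smul hv, hpdf, integral_const_mul, integral_gaussian]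
  rw [← sqrt_inv, ← sqrt_mul (by positivity), ← sqrt_inv]
  congr 1
  field_simp

section

variable {Ω : Type*} {m : MeasurableSpace Ω} {μ : Measure Ω}

lemma mgf_sq_of_map_eq_gaussianReal {X : Ω → ℝ} (hX : AEMeasurable X μ) {v : ℝ≥0} (hv : v ≠ 0)
    (hXv : μ.map X = gaussianReal 0 v) {s : ℝ} (hs : s * v < 1 / 2) :
    mgf (fun ω => X ω ^ 2) μ s = (√(1 - 2 * s * v))⁻¹ := by
  rw [mgf, ← integral_exp_mul_sq_gaussianReal hv hs, ← hXv, integral_map hX (by fun_prop)]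

variable {ι : Type*} {W : ι → Ω → ℝ}

lemma mgf_sum_sq_of_iIndepFun (hmeas : ∀ i, AEMeasurable (W i) μ)
    (hdist : ∀ i, μ.map (W i) = gaussianReal 0 1) (hindep : iIndepFun W μ) (s : Finset ι)
    {t : ℝ} (ht : t < 1 / 2) :
    mgf (fun ω => ∑ i ∈ s, W i ω ^ 2) μ t = (√(1 - 2 * t))⁻¹ ^ s.card := by
  have hsq : iIndepFun (fun i ω => W i ω ^ 2) μ := hindep.comp (fun _ x => x ^ 2) (by fun_prop)
  have hprod := hsq.mgf_sum₀ (fun i => (hmeas i).pow_const 2) s (t := t)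
  simp only [Finset.sum_fn] at hprod
  rw [hprod, Finset.prod_congr rfl fun i _ => mgf_sq_of_map_eq_gaussianReal (hmeas i) one_ne_zero
    (hdist i) (by simpa using ht), Finset.prod_const]
  simp

lemma one_sub_measureReal_le_le_measureReal_le [IsProbabilityMeasure μ] (S : Ω → ℝ) (γ : ℝ) :
    1 - μ.real {ω | S ω ≤ γ} ≤ μ.real {ω | γ ≤ S ω} := by
  have hcover : Set.univ ⊆ {ω | S ω ≤ γ} ∪ {ω | γ ≤ S ω} := fun ω _ => le_total (S ω) γ
  have := (measureReal_mono (μ := μ) hcover).trans (measureReal_union_le _ _)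
  rw [probReal_univ] at this
  linarith

lemma measureReal_sum_sq_le_le_exp_mul [IsFiniteMeasure μ] (hmeas : ∀ i, AEMeasurable (W i) μ)
    (hdist : ∀ i, μ.map (W i) = gaussianReal 0 1) (hindep : iIndepFun W μ) (s : Finset ι)
    (γ : ℝ) {t : ℝ} (ht : t ≤ 0) :
    μ.real {ω | ∑ i ∈ s, W i ω ^ 2 ≤ γ} ≤ exp (-t * γ) * (√(1 - 2 * t))⁻¹ ^ s.card := by
  have hexp_le_one : ∀ ω, ‖exp (t * ∑ i ∈ s, W i ω ^ 2)‖ ≤ 1 := fun ω => by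
    rw [norm_of_nonneg (exp_pos _).le, exp_le_one_iff]
    exact mul_nonpos_of_nonpos_of_nonneg ht (by positivity)
  have hint : Integrable (fun ω => exp (t * ∑ i ∈ s, W i ω ^ 2)) μ :=
    .of_bound (by fun_prop) 1 (ae_of_all _ hexp_le_one)
  rw [← mgf_sum_sq_of_iIndepFun hmeas hdist hindep s (by linarith)]
  exact measure_le_le_exp_mul_mgf γ ht hint

lemma exp_mul_sqrt_div_pow_le {k : ℕ} {γ : ℝ} (hγ : 0 < γ) (hγk : γ < k) :
    exp ((k - γ) / 2) * √(γ / k) ^ k ≤ exp (-((k - γ) ^ 2 / (4 * k))) := by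
  have hk : (0 : ℝ) < k := hγ.trans hγk
  have hlog : log (γ / k) ≤ -((k - γ) / k) - ((k - γ) / k) ^ 2 / 2 := by
    convert log_one_sub_le_neg_sub_sq_div_two (t := (k - γ) / k) (by bound) (by bound) using 2
    field_simp
    ring
  have hsqrt : √(γ / k) ^ k = exp (k * (log (γ / k) / 2)) := by
    rw [exp_nat_mul, sqrt_eq_rpow, rpow_def_of_pos (by positivity)]
    ring_nf
  rw [hsqrt, ← exp_add, exp_le_exp]
  calc (k - γ) / 2 + k * (log (γ / k) / 2)
      ≤ (k - γ) / 2 + k * ((-((k - γ) / k) - ((k - γ) / k) ^ 2 / 2) / 2) := by gcongr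
    _ = -((k - γ) ^ 2 / (4 * k)) := by field_simp; ring

end

theorem stmt3 {Ω : Type*} [MeasureSpace Ω] [IsProbabilityMeasure (ℙ : Measure Ω)]
    (W : ℕ → Ω → ℝ) (hmeas : ∀ i, Measurable (W i))
    (hdist : ∀ i, Measure.map (W i) ℙ = gaussianReal 0 1)
    (hindep : iIndepFun (m := fun _ => Real.measurableSpace) W ℙ)
    (k : ℕ) (γ : ℝ) (hγ : 0 < γ) (hγk : γ < k) :
    ENNReal.ofReal (1 - Real.exp (-((k - γ) ^ 2 / (4 * k))))
      ≤ ℙ {ω | γ ≤ ∑ i ∈ Finset.Icc 1 k, (W i ω) ^ 2} := by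
  -- the minimiser of `t ↦ exp (-t γ) (1 - 2t)^(-k/2)`
  set t := -((k - γ) / (2 * γ)) with ht
  have ht_nonpos : t ≤ 0 := neg_nonpos.2 (div_nonneg (sub_pos.2 hγk).le (by positivity))
  have hchernoff := measureReal_sum_sq_le_le_exp_mul (fun i => (hmeas i).aemeasurable) hdist hindep
    (Finset.Icc 1 k) γ ht_nonpos
  have h_exp : -t * γ = (k - γ) / 2 := by rw [ht]; field_simp
  have h_sqrt : (√(1 - 2 * t))⁻¹ = √(γ / k) := by
    rw [← sqrt_inv, ht]; congr 1; field_simp; ring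
  rw [h_exp, h_sqrt, Nat.card_Icc, add_tsub_cancel_right] at hchernoff
  refine ENNReal.ofReal_le_of_le_toReal ?_
  calc 1 - exp (-((k - γ) ^ 2 / (4 * k)))
      ≤ 1 - (ℙ : Measure Ω).real {ω | ∑ i ∈ Finset.Icc 1 k, W i ω ^ 2 ≤ γ} := by
        linarith [hchernoff.trans (exp_mul_sqrt_div_pow_le hγ hγk)]
    _ ≤ _ := one_sub_measureReal_le_le_measureReal_le _ γ
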